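/- Every ℵ₁-free abelian group of infinite rank contains a pure subgroup that is free abelian of countably infinite rank. -/

import Mathlib

open scoped TensorProduct
open Cardinal

noncomputable section

/-- An abelian group is `ℵ₁`-free if every countable subgroup is free abelian. -/
def Aleph1Free (L : Type*) [AddCommGroup L] : Prop :=
  ∀ S : AddSubgroup L, Countable S → Module.Free ℤ S

/-- The rank of a torsion-free abelian group: the dimension of the `ℚ`-vector space
`ℚ ⊗ G`. -/
def rkQ (G : Type*) [AddCommGroup G] : Cardinal :=
  Module.rank ℚ (ℚ ⊗[ℤ] G)

/-- A subgroup `P` of an abelian group `H` is pure if whenever `n` divides `a ∈ P` in `H`,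
`n` divides `a` in `P`. -/
def IsPureSubgroup {H : Type*} [AddCommGroup H] (P : AddSubgroup H) : Prop :=
  ∀ (n : ℤ), ∀ a ∈ P, (∃ b : H, n • b = a) → ∃ c ∈ P, n • c = a

/-!
Since `ℚ ⊗ H` is the localization of `H` at the nonzero integers, `rkQ H` is the `ℤ`-rank of `H`,
so `H` contains a linearly independent sequence `v`. Let `P` be the purification of the subgroup
`S` generated by `v`: the elements with a nonzero multiple in `S`. It is pure, and since `H` is
torsion-free (its cyclic subgroups are free) an element `x ∈ P` is determined by any pair
`(n, n • x) ∈ ℤ × S`, so `P` is countable. Hence `P` is free by `ℵ₁`-freeness, of infinite rank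
because it contains `v`, and a countable free group of infinite rank has a basis indexed by `ℕ`.
-/

lemma Aleph1Free.isTorsionFree {G : Type*} [AddCommGroup G] (hG : Aleph1Free G) :
    Module.IsTorsionFree ℤ G := by
  refine .of_smul_eq_zero fun n a hna => ?_
  have : Module.Free ℤ (AddSubgroup.zmultiples a) := hG _ inferInstance
  have h : n • (⟨a, AddSubgroup.mem_zmultiples a⟩ : AddSubgroup.zmultiples a) = 0 :=
    Subtype.ext hna
  simpa [Subtype.ext_iff] using h

lemma rkQ_eq_rank (G : Type*) [AddCommGroup G] : rkQ G = Module.rank ℤ G :=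
  (TensorProduct.isBaseChange ℤ G ℚ).rank_eq

lemma exists_linearIndependent_nat_of_aleph0_le_rank {R M : Type*} [CommRing R] [IsDomain R]
    [AddCommGroup M] [Module R M] (h : ℵ₀ ≤ Module.rank R M) :
    ∃ v : ℕ → M, LinearIndependent R v := by
  obtain ⟨s, hs, hli⟩ := exists_set_linearIndependent_of_isDomain R M
  have : Infinite s := aleph0_le_mk_iff.mp (hs ▸ h)
  exact ⟨_, hli.comp _ (Infinite.natEmbedding s).injective⟩

lemma Module.Free.nonempty_basis_nat (R M : Type*) [Ring R] [StrongRankCondition R]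
    [AddCommGroup M] [Module R M] [Module.Free R M] [Countable M]
    (h : ℵ₀ ≤ Module.rank R M) : Nonempty (Module.Basis ℕ R M) := by
  have := nontrivial_of_invariantBasisNumber R
  let b := Module.Free.chooseBasis R M
  have : Countable (Module.Free.ChooseBasisIndex R M) := b.injective.countable
  have : Infinite (Module.Free.ChooseBasisIndex R M) := by
    rwa [← aleph0_le_mk_iff, b.mk_eq_rank'']
  have : Encodable (Module.Free.ChooseBasisIndex R M) := Encodable.ofCountable _
  have := Denumerable.ofEncodableOfInfinite (Module.Free.ChooseBasisIndex R M)
  exact ⟨b.reindex (Denumerable.eqv _)⟩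

namespace AddSubgroup

variable {G : Type*} [AddCommGroup G]

def purification (S : AddSubgroup G) : AddSubgroup G :=
  (Submodule.torsion ℤ (G ⧸ S)).toAddSubgroup.comap (QuotientAddGroup.mk' S)

variable {S : AddSubgroup G}

lemma mem_purification {x : G} : x ∈ S.purification ↔ ∃ n : ℤ, n ≠ 0 ∧ n • x ∈ S := by
  simp [purification, mem_nonZeroDivisors_iff_ne_zero, ← QuotientAddGroup.mk_zsmul,
    QuotientAddGroup.eq_zero_iff]

lemma le_purification : S ≤ S.purification :=
  fun x hx => mem_purification.mpr ⟨1, one_ne_zero, by simpa using hx⟩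

lemma isPureSubgroup_purification : IsPureSubgroup S.purification := by
  rintro n a ha ⟨b, rfl⟩
  rcases eq_or_ne n 0 with rfl | hn
  · exact ⟨0, zero_mem _, by simp⟩
  obtain ⟨m, hm, hma⟩ := mem_purification.mp ha
  exact ⟨b, mem_purification.mpr ⟨m * n, mul_ne_zero hm hn, by rwa [mul_smul]⟩, rfl⟩

instance countable_purification [Module.IsTorsionFree ℤ G] [Countable S] :
    Countable S.purification := by
  have witness : ∀ x : S.purification, ∃ q : ℤ × S, q.1 ≠ 0 ∧ q.1 • (x : G) = q.2 := fun x =>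
    let ⟨n, hn, hnx⟩ := mem_purification.mp x.2
    ⟨(n, ⟨n • x, hnx⟩), hn, rfl⟩
  choose q hq₀ hq using witness
  refine Function.Injective.countable (f := q) fun x y hxy => Subtype.ext ?_
  refine smul_right_injective G (hq₀ x) (?_ : (q x).1 • (x : G) = (q x).1 • (y : G))
  rw [hq x, hxy, hq y]

end AddSubgroup

/-- every `ℵ₁`-free abelian group of infinite rank contains a pure subgroup
which is free abelian of countably infinite rank. -/
theorem stmt14 (H : Type*) [AddCommGroup H] (hfree : Aleph1Free H)
    (hrk : ℵ₀ ≤ rkQ H) :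
    ∃ P : AddSubgroup H, IsPureSubgroup P ∧ Nonempty (Module.Basis ℕ ℤ P) := by
  have := hfree.isTorsionFree
  obtain ⟨v, hv⟩ := exists_linearIndependent_nat_of_aleph0_le_rank (rkQ_eq_rank H ▸ hrk)
  let S := (Submodule.span ℤ (Set.range v)).toAddSubgroup
  have : Countable S := inferInstanceAs (Countable (Submodule.span ℤ (Set.range v)))
  let P := S.purification
  have : Module.Free ℤ P := hfree P inferInstance
  have hvP (i : ℕ) : v i ∈ P := AddSubgroup.le_purification (Submodule.subset_span ⟨i, rfl⟩)
  have hv_in_P : LinearIndependent ℤ fun i => (⟨v i, hvP i⟩ : P) :=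
    .of_comp P.subtype.toIntLinearMap hv
  exact ⟨P, AddSubgroup.isPureSubgroup_purification,
    Module.Free.nonempty_basis_nat ℤ P hv_in_P.aleph0_le_rank⟩

end
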